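/- Let Q be an N×N symmetric positive definite matrix whose smallest eigenvalue λ_min has a unit-norm eigenvector with all components of magnitude 1/√N, and let c ∈ ℝ^N have all components of magnitude 1. Then the maximum of S_K({D_nn c_n²}) over diagonal D with 0 ⪯ D ⪯ Q equals K·λ_min. -/

import Mathlib

/-!
If `0 ⪯ D ⪯ Q` then testing `Q - D` against the flat eigenvector `v` (all `v n ^ 2 = 1 / N`) gives
`(∑ n, D n n) / N ≤ vᵀ Q v = λ_min`, i.e. the diagonal of `D` has mean at most `λ_min`. The `K`
smallest entries of a sequence have mean at most its overall mean (Chebyshev's sum inequality), so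
`S_K ≤ K λ_min`. Conversely `D = λ_min I` satisfies `D ⪯ Q` because `λ_min` bounds the Rayleigh
quotient of `Q`, and attains `S_K = K λ_min`.
-/

open Matrix

/-- Sum of the `K` smallest elements of a finite sequence, as the infimum of sums over
subsets of cardinality `K`. -/
noncomputable def sumKSmallest {N : ℕ} (a : Fin N → ℝ) (K : ℕ) : ℝ :=
  sInf {s : ℝ | ∃ T : Finset (Fin N), T.card = K ∧ s = ∑ n ∈ T, a n}

section SumKSmallest

variable {N : ℕ}

lemma sumKSmallest_le_sum (a : Fin N → ℝ) {K : ℕ} {T : Finset (Fin N)} (hT : T.card = K) :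
    sumKSmallest a K ≤ ∑ n ∈ T, a n := by
  refine csInf_le ?_ ⟨T, hT, rfl⟩
  refine (Set.finite_range fun T : Finset (Fin N) => ∑ n ∈ T, a n).subset ?_ |>.bddBelow
  rintro _ ⟨T, -, rfl⟩
  exact ⟨T, rfl⟩

lemma sumKSmallest_const (l : ℝ) {K : ℕ} (hKN : K ≤ N) :
    sumKSmallest (fun _ : Fin N => l) K = K * l := by
  obtain ⟨T, -, hT⟩ := Finset.exists_subset_card_eq (s := (Finset.univ : Finset (Fin N)))
    (by simpa using hKN)
  have hsum : ∀ {T : Finset (Fin N)}, T.card = K → ∑ _ ∈ T, l = K * l := fun hT => by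
    rw [Finset.sum_const, hT, nsmul_eq_mul]
  refine (sumKSmallest_le_sum _ hT).trans_eq (hsum hT) |>.antisymm ?_
  refine le_csInf ⟨_, T, hT, rfl⟩ ?_
  rintro _ ⟨T', hT', rfl⟩
  exact (hsum hT').ge

lemma exists_card_eq_forall_le_of_notMem (a : Fin N → ℝ) {K : ℕ} (hKN : K ≤ N) :
    ∃ T : Finset (Fin N), T.card = K ∧ ∀ i ∈ T, ∀ j ∉ T, a i ≤ a j := by
  set σ := Tuple.sort a
  have hmono : Monotone (a ∘ σ) := Tuple.monotone_sort a
  refine ⟨(Finset.univ.filter fun i : Fin N => (i : ℕ) < K).map σ.toEmbedding, ?_, ?_⟩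
  · rw [Finset.card_map, Fin.card_filter_val_lt, min_eq_right hKN]
  · simp only [Finset.mem_map_equiv, Finset.mem_filter, Finset.mem_univ, true_and, not_lt]
    intro i hi j hj
    simpa using hmono (show σ.symm i ≤ σ.symm j from Fin.le_def.2 (by omega))

theorem Finset.card_mul_sum_le_card_mul_sum_of_forall_le {ι : Type*} [Fintype ι]
    (a : ι → ℝ) (T : Finset ι) (hT : ∀ i ∈ T, ∀ j ∉ T, a i ≤ a j) :
    Fintype.card ι * ∑ i ∈ T, a i ≤ T.card * ∑ i, a i := by
  classical
  have hanti : Antivary (fun i => if i ∈ T then (1 : ℝ) else 0) a := by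
    intro i j hij
    by_cases hi : i ∈ T
    · simp only [hi, if_true]
      split_ifs <;> norm_num
    · have hj : j ∉ T := fun hj => (hT j hj i hi).not_gt hij
      simp [hi, hj]
  have := hanti.card_mul_sum_le_sum_mul_sum
  simpa [Finset.sum_ite_mem, mul_comm] using this

lemma card_mul_sumKSmallest_le (a : Fin N → ℝ) {K : ℕ} (hKN : K ≤ N) :
    N * sumKSmallest a K ≤ K * ∑ n, a n := by
  obtain ⟨T, hT, hlow⟩ := exists_card_eq_forall_le_of_notMem a hKN
  calc N * sumKSmallest a K ≤ N * ∑ n ∈ T, a n := by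
        gcongr; exact sumKSmallest_le_sum a hT
    _ ≤ K * ∑ n, a n := by
        simpa [hT] using Finset.card_mul_sum_le_card_mul_sum_of_forall_le a T hlow

end SumKSmallest

section DiagonalMinorant

variable {n : Type*} [Fintype n] [DecidableEq n]

lemma dotProduct_diagonal_mulVec (d x : n → ℝ) :
    x ⬝ᵥ diagonal d *ᵥ x = ∑ i, d i * x i ^ 2 := by
  simp only [dotProduct, mulVec_diagonal]
  exact Finset.sum_congr rfl fun i _ => by ring

lemma posSemidef_sub_diagonal_iff {Q : Matrix n n ℝ} (hQ : Q.IsHermitian) {d : n → ℝ} :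
    (Q - diagonal d).PosSemidef ↔ ∀ x, ∑ i, d i * x i ^ 2 ≤ x ⬝ᵥ Q *ᵥ x := by
  have hform : ∀ x, star x ⬝ᵥ (Q - diagonal d) *ᵥ x = x ⬝ᵥ Q *ᵥ x - ∑ i, d i * x i ^ 2 :=
    fun x => by rw [star_trivial, sub_mulVec, dotProduct_sub, dotProduct_diagonal_mulVec]
  refine ⟨fun h x => sub_nonneg.1 (hform x ▸ h.dotProduct_mulVec_nonneg x), fun h => ?_⟩
  exact .of_dotProduct_mulVec_nonneg (hQ.sub (isHermitian_diagonal d)) fun x =>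
    hform x ▸ sub_nonneg.2 (h x)

end DiagonalMinorant

theorem max_sumKSmallest_eq_K_lambda_min_general {N : ℕ}
    (Q : Matrix (Fin N) (Fin N) ℝ) (hQ : Q.PosDef)
    (lmin : ℝ) (v : Fin N → ℝ)
    (hv_eig : Q *ᵥ v = lmin • v)
    (hv_norm : v ⬝ᵥ v = 1)
    (hv_mag : ∀ n, |v n| = 1 / Real.sqrt N)
    (h_min : ∀ x : Fin N → ℝ, lmin * (x ⬝ᵥ x) ≤ x ⬝ᵥ Q *ᵥ x)
    (c : Fin N → ℝ) (hc : ∀ n, |c n| = 1)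
    (K : ℕ) (hKN : K ≤ N) :
    IsGreatest {s : ℝ | ∃ d : Fin N → ℝ, (Matrix.diagonal d).PosSemidef ∧
        (Q - Matrix.diagonal d).PosSemidef ∧
        s = sumKSmallest (fun n => d n * c n ^ 2) K}
      (K * lmin) := by
  have hc_sq (d : Fin N → ℝ) : (fun n => d n * c n ^ 2) = d :=
    funext fun n => by rw [← sq_abs, hc n, one_pow, mul_one]
  have hvQv : v ⬝ᵥ Q *ᵥ v = lmin := by
    rw [hv_eig, dotProduct_smul, smul_eq_mul, hv_norm, mul_one]
  have hN : (0 : ℝ) < N := Nat.cast_pos.2 <| Nat.pos_of_ne_zero fun h => by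
    subst h; simp at hv_norm
  have hv_sq (n : Fin N) : v n ^ 2 = (N : ℝ)⁻¹ := by
    rw [← sq_abs, hv_mag n, div_pow, one_pow, Real.sq_sqrt hN.le, one_div]
  refine ⟨⟨fun _ => lmin, ?_, ?_, ?_⟩, ?_⟩
  · have hlmin : 0 ≤ lmin := by
      simpa only [star_trivial, hvQv] using hQ.posSemidef.dotProduct_mulVec_nonneg v
    exact posSemidef_diagonal_iff.2 fun _ => hlmin
  · refine (posSemidef_sub_diagonal_iff hQ.isHermitian).2 fun x => ?_
    simpa [dotProduct, Finset.mul_sum, sq] using h_min x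
  · rw [hc_sq, sumKSmallest_const lmin hKN]
  · rintro _ ⟨d, -, hQd, rfl⟩
    have hsum : ∑ n, d n ≤ N * lmin := by
      have := (posSemidef_sub_diagonal_iff hQ.isHermitian).1 hQd v
      rw [hvQv] at this
      simp only [hv_sq, ← Finset.sum_mul] at this
      rwa [← div_eq_mul_inv, div_le_iff₀ hN, mul_comm lmin] at this
    rw [hc_sq]
    refine le_of_mul_le_mul_left ?_ hN
    calc N * sumKSmallest d K ≤ K * ∑ n, d n := card_mul_sumKSmallest_le d hKN
      _ ≤ K * (N * lmin) := by gcongr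
      _ = N * (K * lmin) := by ring

/-- Under the equal-magnitude-eigenvector assumption and `|c_n| = 1`, the
maximum of `S_K({D_nn c_n²})` over diagonal `D` with `0 ⪯ D ⪯ Q` equals `K·λ_min(Q)`. -/
theorem max_sumKSmallest_eq_K_lambda_min {N : ℕ}
    (Q : Matrix (Fin N) (Fin N) ℝ) (hQ : Q.PosDef) (hQsymm : Q.IsSymm)
    (lmin : ℝ) (v : Fin N → ℝ)
    (hv_eig : Q *ᵥ v = lmin • v)
    (hv_norm : v ⬝ᵥ v = 1)
    (hv_mag : ∀ n, |v n| = 1 / Real.sqrt N)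
    (h_min : ∀ x : Fin N → ℝ, lmin * (x ⬝ᵥ x) ≤ x ⬝ᵥ Q *ᵥ x)
    (c : Fin N → ℝ) (hc : ∀ n, |c n| = 1)
    (K : ℕ) (hK1 : 1 ≤ K) (hKN : K ≤ N) :
    IsGreatest {s : ℝ | ∃ d : Fin N → ℝ, (Matrix.diagonal d).PosSemidef ∧
        (Q - Matrix.diagonal d).PosSemidef ∧
        s = sumKSmallest (fun n => d n * c n ^ 2) K}
      (K * lmin) :=
  max_sumKSmallest_eq_K_lambda_min_general Q hQ lmin v hv_eig hv_norm hv_mag h_min c hc K hKN
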